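/- arXiv:1305.4877 — 2 statements merged into one kernel-verified Lean document; each statement's English description precedes it below -/
import Mathlib

section
/- Let σ be a 123-avoiding permutation of {1, …, n}, and let i be the least index with σ(i) < σ(i+1), setting i = n if σ is strictly decreasing. For 1 ≤ j ≤ n+1, let σ_j be the permutation of {1, …, n+1} obtained by inserting the value n+1 into position j of σ, i.e., σ_j = (σ(1), …, σ(j−1), n+1, σ(j), …, σ(n)). Then σ_j is 123-avoiding if and only if j ≤ i + 1; in particular, σ has exactly i + 1 successors under insertion that preserve 123-avoidance. -/
/-!
A 123-pattern of the extended permutation either avoids the new maximum `n+1`, and then it is a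
pattern of `σ`, or it ends at `n+1` (the maximum cannot be the `1` or the `2`), and then its first
two entries form an ascent of `σ` to the left of the insertion point. So the insertion preserves
123-avoidance iff `σ` has no ascent left of that point. The first `i` entries of `σ` decrease and
`σ(i) < σ(i+1)`, so this happens iff `j ≤ i + 1`.
-/

/-- A function on `Fin n` is 123-avoiding if there are no indices `a < b < c`
with `σ a < σ b < σ c`. -/
def Avoids123 (n : ℕ) (σ : Fin n → Fin n) : Prop :=
  ∀ a b c : Fin n, a < b → b < c → σ a < σ b → σ b < σ c → False

/-- Insertion of the largest value `n+1` into position `j+1` (1-based) of a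
permutation of `{1, …, n}` (encoded 0-based on `Fin n`): the result is
`(σ(1), …, σ(j), n+1, σ(j+1), …, σ(n))` in 1-based notation. -/
def insertTop (n : ℕ) (σ : Fin n → Fin n) (j : Fin (n+1)) : Fin (n+1) → Fin (n+1) :=
  fun p =>
    if hpj : p = j then Fin.last n
    else if h : (p : ℕ) < (j : ℕ) then
      (σ ⟨(p : ℕ), by have := j.isLt; omega⟩).castSucc
    else
      (σ ⟨(p : ℕ) - 1, by
        have hp := p.isLt
        have hj := j.isLt
        have h2 : (p : ℕ) ≠ (j : ℕ) := fun hh => hpj (Fin.ext hh)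
        omega⟩).castSucc

section insertTop

variable {n : ℕ} (σ : Fin n → Fin n) (j : Fin (n + 1))

@[simp]
lemma insertTop_self : insertTop n σ j j = Fin.last n := by
  simp [insertTop]

@[simp]
lemma insertTop_succAbove (k : Fin n) : insertTop n σ j (j.succAbove k) = (σ k).castSucc := by
  rcases lt_or_ge k.castSucc j with h | h
  · rw [Fin.succAbove_of_castSucc_lt _ _ h, insertTop, dif_neg h.ne, dif_pos (Fin.lt_def.1 h)]
    rfl
  · have hj : ¬ (k.succ : ℕ) < j := by
      rw [Fin.val_succ]; rw [Fin.le_def, Fin.val_castSucc] at h; omega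
    rw [Fin.succAbove_of_le_castSucc _ _ h, insertTop, dif_neg (Fin.le_castSucc_iff.1 h).ne',
      dif_neg hj]
    rfl

theorem avoids123_insertTop_iff :
    Avoids123 (n + 1) (insertTop n σ j) ↔
      Avoids123 n σ ∧ AntitoneOn σ {k | k.castSucc < j} := by
  constructor
  · intro h
    refine ⟨fun a b c hab hbc h₁ h₂ => ?_, fun a ha b hb hab => ?_⟩
    · refine h (j.succAbove a) (j.succAbove b) (j.succAbove c) ?_ ?_ ?_ ?_ <;>
        simpa [Fin.succAbove_lt_succAbove_iff]
    · by_contra! hlt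
      refine h a.castSucc b.castSucc j (Fin.castSucc_lt_castSucc_iff.2 (hab.lt_of_ne ?_)) hb ?_ ?_
      · rintro rfl; exact hlt.false
      · rw [← Fin.succAbove_of_castSucc_lt _ _ ha, ← Fin.succAbove_of_castSucc_lt _ _ hb]
        simpa
      · rw [← Fin.succAbove_of_castSucc_lt _ _ hb]
        simp [Fin.castSucc_lt_last]
  · rintro ⟨hσ, hanti⟩ a b c hab hbc h₁ h₂
    obtain ⟨a, rfl⟩ := Fin.exists_succAbove_eq (x := a) (y := j) <| by
      rintro rfl; rw [insertTop_self] at h₁; exact (Fin.le_last _).not_gt h₁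
    obtain ⟨b, rfl⟩ := Fin.exists_succAbove_eq (x := b) (y := j) <| by
      rintro rfl; rw [insertTop_self] at h₂; exact (Fin.le_last _).not_gt h₂
    rw [Fin.succAbove_lt_succAbove_iff] at hab
    simp only [insertTop_succAbove, Fin.castSucc_lt_castSucc_iff] at h₁ h₂
    rcases eq_or_ne c j with rfl | hcj
    · have hb : b.castSucc < c := (Fin.succAbove_lt_iff_castSucc_lt _ _).1 hbc
      exact (hanti (Fin.castSucc_lt_castSucc_iff.2 hab |>.trans hb) hb hab.le).not_gt h₁
    · obtain ⟨c, rfl⟩ := Fin.exists_succAbove_eq hcj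
      simp only [insertTop_succAbove, Fin.castSucc_lt_castSucc_iff] at h₂
      exact hσ a b c hab (Fin.succAbove_lt_succAbove_iff.1 hbc) h₁ h₂

end insertTop

section descents

variable {α : Type*} [Preorder α] {n i : ℕ} {f : Fin n → α}

theorem strictAntiOn_val_lt_of_lt_pred
    (hdesc : ∀ k : ℕ, 1 ≤ k → k < i → ∀ hk : k < n,
      f ⟨k, hk⟩ < f ⟨k - 1, (Nat.sub_le k 1).trans_lt hk⟩) :
    StrictAntiOn f {k | (k : ℕ) < i} := by
  rintro ⟨a, ha⟩ - ⟨b, hb⟩ hbi hab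
  simp only [Set.mem_ofPred_eq, Fin.mk_lt_mk] at hbi hab
  induction b with
  | zero => omega
  | succ m ih =>
    have step : f ⟨m + 1, hb⟩ < f ⟨m, by omega⟩ := hdesc (m + 1) (by omega) hbi hb
    rcases Nat.lt_succ_iff_lt_or_eq.1 hab with hlt | rfl
    · exact step.trans (ih (by omega) (by omega) hlt)
    · exact step

theorem antitoneOn_castSucc_lt_iff (hi : 1 ≤ i)
    (hdesc : ∀ k : ℕ, 1 ≤ k → k < i → ∀ hk : k < n,
      f ⟨k, hk⟩ < f ⟨k - 1, (Nat.sub_le k 1).trans_lt hk⟩)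
    (hasc : ∀ h : i < n, f ⟨i - 1, (Nat.sub_le i 1).trans_lt h⟩ < f ⟨i, h⟩)
    (j : Fin (n + 1)) : AntitoneOn f {k | k.castSucc < j} ↔ (j : ℕ) ≤ i := by
  constructor
  · intro hanti
    by_contra! hij
    have hin : i < n := by omega
    refine (hanti (a := ⟨i - 1, by omega⟩) (b := ⟨i, hin⟩) ?_ ?_ ?_).not_gt (hasc hin) <;>
      simp only [Set.mem_ofPred_eq, Fin.lt_def, Fin.le_def, Fin.val_castSucc] <;> omega
  · intro hji
    refine (strictAntiOn_val_lt_of_lt_pred hdesc).antitoneOn.mono fun k hk => ?_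
    simp only [Set.mem_ofPred_eq, Fin.lt_def, Fin.val_castSucc] at hk ⊢
    omega

end descents

/-- West's succession rule for 123-avoiding permutations. Let `σ` be a 123-avoiding
permutation of `{1, …, n}` (encoded 0-based on `Fin n`), and let `i` be the least
1-based index with `σ(i) < σ(i+1)` (with `i = n` if `σ` is strictly decreasing).
Then the permutation `σ_j` of `{1, …, n+1}` obtained by inserting `n+1` into
position `j` (1-based, `1 ≤ j ≤ n+1`) is 123-avoiding iff `j ≤ i + 1`; in
particular exactly `i + 1` of the insertions preserve 123-avoidance. -/
theorem insertTop_avoids123_iff (n : ℕ) (σ : Equiv.Perm (Fin n))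
    (hσ : Avoids123 n σ) (i : ℕ) (hi1 : 1 ≤ i) (hin : i ≤ n)
    (hdesc : ∀ k : ℕ, 1 ≤ k → k < i → ∀ hk : k < n, σ ⟨k, hk⟩ < σ ⟨k - 1, by omega⟩)
    (hasc : ∀ h : i < n, σ ⟨i - 1, by omega⟩ < σ ⟨i, h⟩) :
    (∀ j : ℕ, (hj1 : 1 ≤ j) → (hj2 : j ≤ n + 1) →
        (Avoids123 (n+1) (insertTop n σ ⟨j - 1, by omega⟩) ↔ j ≤ i + 1)) ∧
    Nat.card {j : Fin (n+1) // Avoids123 (n+1) (insertTop n σ j)} = i + 1 := by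
  have key (j : Fin (n + 1)) : Avoids123 (n + 1) (insertTop n σ j) ↔ (j : ℕ) ≤ i := by
    rw [avoids123_insertTop_iff, antitoneOn_castSucc_lt_iff hi1 hdesc hasc]
    exact and_iff_right hσ
  refine ⟨fun j _ _ => by rw [key, Fin.val_mk]; omega, ?_⟩
  calc Nat.card {j : Fin (n + 1) // Avoids123 (n + 1) (insertTop n σ j)}
      = Nat.card (Set.Iic (⟨i, by omega⟩ : Fin (n + 1))) :=
        Nat.card_congr <| Equiv.subtypeEquivRight fun j => (key j).trans (by simp [Fin.le_def])
    _ = i + 1 := by rw [Nat.card_eq_fintype_card, Fintype.card_Iic, Fin.card_Iic]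
end

section
/- For n ≥ 2, the map that sends a pair (D, r), where D is a Dyck path of semilength n−1 with last descent length k and r is an integer with 0 ≤ r ≤ k, to the Dyck path of semilength n obtained from D by inserting an ascent-descent pair at the point of the last descent of D that has r descents after it, is a bijection from the set of such pairs onto the set of all Dyck paths of semilength n; moreover, the resulting path has last descent length r + 1 (so a path with last descent length k has exactly k + 1 successors, with last descent lengths 1, 2, …, k+1). -/
/-- A Dyck path of semilength `n`: a sequence of `2n` steps (`true` = ascent `+1`,
`false` = descent `-1`) with all partial sums nonnegative and total sum `0`. -/
def IsDyckPath (n : ℕ) (s : Fin (2*n) → Bool) : Prop :=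
  (∀ j : Fin (2*n),
      (Finset.univ.filter (fun i => i ≤ j ∧ s i = false)).card
        ≤ (Finset.univ.filter (fun i => i ≤ j ∧ s i = true)).card) ∧
  (Finset.univ.filter (fun i => s i = true)).card = n

/-- The last descent length: the number of trailing descents of the path. -/
def lastDescent (n : ℕ) (s : Fin (2*n) → Bool) : ℕ :=
  (Finset.univ.filter (fun i : Fin (2*n) => ∀ j, i ≤ j → s j = false)).card

/-- Insertion of an ascent-descent pair into a path of `2m` steps at the point with
`r` (trailing) descents after it, i.e. at position `2m - r`. -/
def insertPeak (m : ℕ) (D : Fin (2*m) → Bool) (r : ℕ) : Fin (2*(m+1)) → Bool :=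
  fun p =>
    if h1 : (p : ℕ) < 2*m - r then D ⟨(p : ℕ), by omega⟩
    else if h2 : (p : ℕ) = 2*m - r then true
    else if h3 : (p : ℕ) = 2*m - r + 1 then false
    else D ⟨(p : ℕ) - 2, by have h4 := p.isLt; omega⟩

/-!
Inserting a peak (an ascent followed by a descent) into a Dyck path keeps every prefix
height nonnegative, and removing a peak does too. Inserted just before the final `r`
descents, the peak becomes the last one, so the new path ends in exactly `r + 1` descents:
`r` can be read off the image, and deleting the peak recovers `D`. Conversely a Dyck path of
positive semilength ends in a run of `k ≥ 1` descents preceded by an ascent; deleting this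
last peak gives a preimage with `r = k - 1`.
-/

open Finset

def prefixCount {N : ℕ} (s : Fin N → Bool) (b : Bool) (t : ℕ) : ℕ :=
  #{i : Fin N | (i : ℕ) < t ∧ s i = b}

section PrefixCount

variable {N : ℕ} (s : Fin N → Bool) (b : Bool)

@[simp]
lemma prefixCount_zero : prefixCount s b 0 = 0 := by
  simp [prefixCount]

lemma prefixCount_succ {t : ℕ} (ht : t < N) :
    prefixCount s b (t + 1) = prefixCount s b t + if s ⟨t, ht⟩ = b then 1 else 0 := by
  unfold prefixCount
  split_ifs with h
  · rw [← card_insert_of_notMem (a := ⟨t, ht⟩) (by simp)]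
    congr 1; ext i
    simp only [mem_filter, mem_univ, true_and, mem_insert, Fin.ext_iff]
    grind
  · rw [add_zero]
    congr 1; ext i
    simp only [mem_filter, mem_univ, true_and]
    grind

lemma prefixCount_of_le {t : ℕ} (ht : N ≤ t) : prefixCount s b t = #{i | s i = b} := by
  simp only [prefixCount]
  congr 1; ext i; simp [i.isLt.trans_le ht]

lemma prefixCount_false_add_prefixCount_true (t : ℕ) :
    prefixCount s false t + prefixCount s true t = min N t := by
  rw [← Fin.card_filter_val_lt, prefixCount, prefixCount, ← card_union_of_disjoint]
  · congr 1; ext i; simp only [mem_union, mem_filter, mem_univ, true_and, ← and_or_left]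
    cases s i <;> simp
  · exact disjoint_filter.2 fun i _ h1 h2 => by simp_all

end PrefixCount

lemma isDyckPath_iff {n : ℕ} (s : Fin (2*n) → Bool) :
    IsDyckPath n s ↔
      (∀ t ≤ 2*n, prefixCount s false t ≤ prefixCount s true t) ∧
        prefixCount s true (2*n) = n := by
  have closed_prefix (j : Fin (2*n)) (b : Bool) :
      #{i | i ≤ j ∧ s i = b} = prefixCount s b (j + 1) := by
    simp only [prefixCount, Fin.le_def, Nat.lt_succ_iff]
  rw [IsDyckPath, prefixCount_of_le s true le_rfl]
  simp only [closed_prefix]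
  refine and_congr_left fun _ => ⟨fun h t ht => ?_, fun h j => h _ j.isLt⟩
  rcases t with _ | t
  · simp
  · exact h ⟨t, ht⟩

lemma Fin.card_filter_le_val (N a : ℕ) : #{i : Fin N | a ≤ (i : ℕ)} = N - a := by
  have := card_filter_add_card_filter_not (s := (univ : Finset (Fin N))) (fun i => (i : ℕ) < a)
  simp only [not_lt, Fin.card_filter_val_lt, card_univ, Fintype.card_fin] at this
  omega

lemma lastDescent_le (n : ℕ) (s : Fin (2*n) → Bool) : lastDescent n s ≤ 2*n :=
  card_le_univ _ |>.trans_eq (Fintype.card_fin _)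

lemma le_lastDescent_iff {n t : ℕ} (s : Fin (2*n) → Bool) (ht : t ≤ 2*n) :
    t ≤ lastDescent n s ↔ ∀ j : Fin (2*n), 2*n - t ≤ j → s j = false := by
  constructor
  · intro hle j hj
    by_contra hj_false
    have hsub : ({i | ∀ k, i ≤ k → s k = false} : Finset (Fin (2*n))) ⊆ Ioi j := by
      intro i hi
      simp only [mem_filter, mem_univ, true_and] at hi
      exact mem_Ioi.2 <| lt_of_not_ge fun hij => hj_false (hi j hij)
    have := (card_le_card hsub).trans_eq (Fin.card_Ioi j)
    rw [lastDescent] at hle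
    omega
  · intro htail
    calc t = #{i : Fin (2*n) | 2*n - t ≤ (i : ℕ)} := by rw [Fin.card_filter_le_val]; omega
      _ ≤ lastDescent n s := card_le_card fun i hi => by
        simp only [mem_filter, mem_univ, true_and] at hi ⊢
        exact fun k hik => htail k (hi.trans hik)

lemma apply_eq_false_of_sub_lastDescent_le {n : ℕ} (s : Fin (2*n) → Bool) {j : Fin (2*n)}
    (hj : 2*n - lastDescent n s ≤ j) : s j = false :=
  (le_lastDescent_iff s (lastDescent_le n s)).1 le_rfl j hj

lemma apply_sub_lastDescent_sub_one_eq_true {n : ℕ} (s : Fin (2*n) → Bool)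
    (hk : lastDescent n s < 2*n) : s ⟨2*n - lastDescent n s - 1, by omega⟩ = true := by
  obtain ⟨j, hj, hsj⟩ : ∃ j : Fin (2*n), 2*n - (lastDescent n s + 1) ≤ j ∧ s j ≠ false := by
    simpa using mt (le_lastDescent_iff s hk).2 (by omega)
  have hj_eq : j = ⟨2*n - lastDescent n s - 1, by omega⟩ := by
    refine Fin.ext (show (j : ℕ) = 2*n - lastDescent n s - 1 from le_antisymm ?_ (by omega))
    by_contra! hlt
    exact hsj (apply_eq_false_of_sub_lastDescent_le s (by omega))
  simpa [← hj_eq] using hsj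

namespace IsDyckPath

variable {n : ℕ} {s : Fin (2*(n+1)) → Bool}

lemma apply_zero (hs : IsDyckPath (n+1) s) : s ⟨0, by omega⟩ = true := by
  have h := (isDyckPath_iff s).1 hs |>.1 1 (by omega)
  rw [prefixCount_succ s false (by omega), prefixCount_succ s true (by omega)] at h
  cases hs0 : s ⟨0, _⟩ <;> simp_all

lemma apply_last (hs : IsDyckPath (n+1) s) : s ⟨2*n + 1, by omega⟩ = false := by
  obtain ⟨hprefix, htotal⟩ := (isDyckPath_iff s).1 hs
  have hsum := prefixCount_false_add_prefixCount_true s (2*n + 1)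
  have h := hprefix (2*n + 1) (by omega)
  have htrue := prefixCount_succ s true (show 2*n + 1 < 2*(n+1) by omega)
  rw [show 2*n + 1 + 1 = 2*(n+1) by omega, htotal] at htrue
  by_contra hlast
  rw [if_pos (Bool.not_eq_false _ ▸ hlast)] at htrue
  omega

end IsDyckPath

section InsertPeak

variable {m : ℕ} (D : Fin (2*m) → Bool) (r : ℕ)

lemma insertPeak_of_lt {p : Fin (2*(m+1))} (h : (p : ℕ) < 2*m - r) :
    insertPeak m D r p = D ⟨p, by omega⟩ :=
  dif_pos h

lemma insertPeak_of_eq {p : Fin (2*(m+1))} (h : (p : ℕ) = 2*m - r) :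
    insertPeak m D r p = true := by
  simp [insertPeak, h]

lemma insertPeak_of_eq_succ {p : Fin (2*(m+1))} (h : (p : ℕ) = 2*m - r + 1) :
    insertPeak m D r p = false := by
  simp [insertPeak, h]

lemma insertPeak_of_ge {p : Fin (2*(m+1))} (h : 2*m - r + 2 ≤ p) :
    insertPeak m D r p = D ⟨p - 2, by omega⟩ := by
  simp [insertPeak, show ¬ (p : ℕ) < 2*m - r by omega, show (p : ℕ) ≠ 2*m - r by omega,
    show (p : ℕ) ≠ 2*m - r + 1 by omega]

lemma prefixCount_insertPeak_of_le (b : Bool) {t : ℕ} (ht : t ≤ 2*m - r) :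
    prefixCount (insertPeak m D r) b t = prefixCount D b t := by
  induction t with
  | zero => simp
  | succ t ih =>
    rw [prefixCount_succ _ _ (by omega), prefixCount_succ _ _ (by omega), ih (by omega),
      insertPeak_of_lt D r (by exact ht)]

lemma prefixCount_insertPeak_peak (b : Bool) :
    prefixCount (insertPeak m D r) b (2*m - r + 1) = prefixCount D b (2*m - r) + b.toNat := by
  rw [prefixCount_succ _ _ (by omega), prefixCount_insertPeak_of_le D r b le_rfl,
    insertPeak_of_eq D r rfl]
  cases b <;> rfl

lemma prefixCount_insertPeak_of_ge (b : Bool) {t : ℕ} (h : 2*m - r ≤ t) (ht : t ≤ 2*m) :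
    prefixCount (insertPeak m D r) b (t + 2) = prefixCount D b t + 1 := by
  induction t, h using Nat.le_induction with
  | base =>
    rw [prefixCount_succ _ _ (by omega), prefixCount_insertPeak_peak,
      insertPeak_of_eq_succ D r rfl]
    cases b <;> simp
  | succ t h ih =>
    rw [prefixCount_succ _ _ (by omega), ih (by omega), prefixCount_succ _ _ (by omega),
      insertPeak_of_ge D r (by exact Nat.add_le_add_right h 2), add_right_comm]
    rfl

theorem isDyckPath_insertPeak_iff :
    IsDyckPath (m+1) (insertPeak m D r) ↔ IsDyckPath m D := by
  have hlow (b) {t} (ht : t ≤ 2*m - r) := prefixCount_insertPeak_of_le D r b ht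
  have hhigh (b) {t} (h : 2*m - r ≤ t) (ht : t ≤ 2*m) := prefixCount_insertPeak_of_ge D r b h ht
  have htotal : prefixCount (insertPeak m D r) true (2*(m+1)) = prefixCount D true (2*m) + 1 :=
    hhigh true (t := 2*m) (by omega) le_rfl
  rw [isDyckPath_iff, isDyckPath_iff, htotal]
  refine and_congr ⟨fun h t ht => ?_, fun h t ht => ?_⟩ (by omega)
  · rcases le_total t (2*m - r) with hq | hq
    · simpa only [hlow _ hq] using h t (by omega)
    · have := h (t + 2) (by omega)
      rw [hhigh false hq ht, hhigh true hq ht] at this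
      omega
  · obtain hq | rfl | hq : t ≤ 2*m - r ∨ t = 2*m - r + 1 ∨ 2*m - r + 2 ≤ t := by omega
    · simpa only [hlow _ hq] using h t (by omega)
    · rw [prefixCount_insertPeak_peak, prefixCount_insertPeak_peak]
      have := h (2*m - r) (by omega)
      simp only [Bool.toNat_false, Bool.toNat_true]
      omega
    · obtain ⟨u, rfl⟩ : ∃ u, t = u + 2 := ⟨t - 2, by omega⟩
      rw [hhigh false (by omega) (by omega), hhigh true (by omega) (by omega)]
      have := h u (by omega)
      omega

theorem lastDescent_insertPeak (hr : r ≤ lastDescent m D) :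
    lastDescent (m+1) (insertPeak m D r) = r + 1 := by
  have hr2m : r ≤ 2*m := hr.trans (lastDescent_le m D)
  refine le_antisymm ?_ ((le_lastDescent_iff _ (by omega)).2 fun j hj => ?_)
  · by_contra! hlt
    have := (le_lastDescent_iff (insertPeak m D r) (lastDescent_le _ _)).1 le_rfl
      ⟨2*m - r, by omega⟩ (by simp only; omega)
    rw [insertPeak_of_eq D r rfl] at this
    exact Bool.noConfusion this
  · rcases Nat.lt_or_ge j (2*m - r + 2) with hj' | hj'
    · exact insertPeak_of_eq_succ D r (by omega)
    · rw [insertPeak_of_ge D r hj']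
      exact (le_lastDescent_iff D hr2m).1 hr _ (by simp only; omega)

end InsertPeak

def deletePeak (m q : ℕ) (s : Fin (2*(m+1)) → Bool) : Fin (2*m) → Bool :=
  fun p => if (p : ℕ) < q then s ⟨p, by omega⟩ else s ⟨p + 2, by omega⟩

section DeletePeak

variable {m : ℕ}

lemma deletePeak_insertPeak (D : Fin (2*m) → Bool) (r : ℕ) :
    deletePeak m (2*m - r) (insertPeak m D r) = D := by
  funext p
  unfold deletePeak
  split_ifs with hp
  · exact insertPeak_of_lt D r hp
  · exact insertPeak_of_ge D r (by simp only; omega)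

lemma insertPeak_deletePeak (s : Fin (2*(m+1)) → Bool) (r : ℕ)
    (hup : s ⟨2*m - r, by omega⟩ = true) (hdown : s ⟨2*m - r + 1, by omega⟩ = false) :
    insertPeak m (deletePeak m (2*m - r) s) r = s := by
  funext p
  obtain hp | hp | hp | hp :
      (p : ℕ) < 2*m - r ∨ (p : ℕ) = 2*m - r ∨ (p : ℕ) = 2*m - r + 1 ∨ 2*m - r + 2 ≤ p := by
    omega
  · rw [insertPeak_of_lt _ r hp, deletePeak, if_pos hp]
  · rw [insertPeak_of_eq _ r hp, ← hup]
    exact congrArg s (Fin.ext hp.symm)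
  · rw [insertPeak_of_eq_succ _ r hp, ← hdown]
    exact congrArg s (Fin.ext hp.symm)
  · rw [insertPeak_of_ge _ r hp, deletePeak, if_neg (by simp only; omega)]
    congr 1
    ext
    simp only
    omega

theorem eq_and_eq_of_insertPeak_eq {D D' : Fin (2*m) → Bool} {r r' : ℕ}
    (hr : r ≤ lastDescent m D) (hr' : r' ≤ lastDescent m D')
    (h : insertPeak m D r = insertPeak m D' r') : D = D' ∧ r = r' := by
  obtain rfl : r = r' := by
    simpa [lastDescent_insertPeak D r hr, lastDescent_insertPeak D' r' hr'] using
      congrArg (lastDescent (m+1)) h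
  exact ⟨by rw [← deletePeak_insertPeak D r, h, deletePeak_insertPeak], rfl⟩

theorem exists_insertPeak_eq {s : Fin (2*(m+1)) → Bool} (hs : IsDyckPath (m+1) s) :
    ∃ D r, IsDyckPath m D ∧ r ≤ lastDescent m D ∧ insertPeak m D r = s := by
  set k := lastDescent (m+1) s
  have hk_pos : 1 ≤ k := (le_lastDescent_iff s (by omega)).2 fun j hj => by
    rw [← hs.apply_last]; congr 1; ext; simp only; omega
  have hk_lt : k < 2*(m+1) := lt_of_not_ge fun hk => by
    have := (le_lastDescent_iff s le_rfl).1 hk ⟨0, by omega⟩ (by simp only; omega)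
    rw [hs.apply_zero] at this
    exact Bool.noConfusion this
  have hup : s ⟨2*m - (k - 1), by omega⟩ = true := by
    rw [← apply_sub_lastDescent_sub_one_eq_true s hk_lt]; congr 1; ext; simp only; omega
  have hdown (j : Fin (2*(m+1))) (hj : 2*m - (k - 1) + 1 ≤ j) : s j = false :=
    apply_eq_false_of_sub_lastDescent_le s (by omega)
  have hins := insertPeak_deletePeak s (k - 1) hup (hdown _ le_rfl)
  refine ⟨_, k - 1, ?_, ?_, hins⟩
  · rwa [← isDyckPath_insertPeak_iff _ (k - 1), hins]
  · refine (le_lastDescent_iff _ (by omega)).2 fun j hj => ?_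
    rw [deletePeak, if_neg (by omega)]
    exact hdown _ (by simp only; omega)

end DeletePeak

theorem insertPeak_bijective_general (m : ℕ) :
    (∀ (D : Fin (2*m) → Bool), IsDyckPath m D → ∀ r : ℕ, r ≤ lastDescent m D →
        IsDyckPath (m+1) (insertPeak m D r) ∧
        lastDescent (m+1) (insertPeak m D r) = r + 1) ∧
    (∃ g : {Dr : (Fin (2*m) → Bool) × ℕ //
            IsDyckPath m Dr.1 ∧ Dr.2 ≤ lastDescent m Dr.1} →
          {s : Fin (2*(m+1)) → Bool // IsDyckPath (m+1) s},
      (∀ Dr, (g Dr).1 = insertPeak m Dr.1.1 Dr.1.2) ∧ Function.Bijective g) := by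
  refine ⟨fun D hD r hr =>
    ⟨(isDyckPath_insertPeak_iff D r).2 hD, lastDescent_insertPeak D r hr⟩, ?_⟩
  refine ⟨fun Dr => ⟨insertPeak m Dr.1.1 Dr.1.2, (isDyckPath_insertPeak_iff _ _).2 Dr.2.1⟩,
    fun _ => rfl, ?_, ?_⟩
  · rintro ⟨⟨D, r⟩, _, hr⟩ ⟨⟨D', r'⟩, _, hr'⟩ heq
    obtain ⟨rfl, rfl⟩ := eq_and_eq_of_insertPeak_eq hr hr' (congrArg Subtype.val heq)
    rfl
  · rintro ⟨s, hs⟩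
    obtain ⟨D, r, hD, hr, rfl⟩ := exists_insertPeak_eq hs
    exact ⟨⟨(D, r), hD, hr⟩, rfl⟩

/-- For `n = m + 1 ≥ 2`: sending a pair `(D, r)` — where `D` is a Dyck path of
semilength `n - 1` with last descent length `k` and `0 ≤ r ≤ k` — to the Dyck path
of semilength `n` obtained by inserting an ascent-descent pair at the point of the
last descent of `D` having `r` descents after it, is a bijection onto the set of
all Dyck paths of semilength `n`, and the resulting path has last descent length
`r + 1` (so a path with last descent length `k` has exactly `k + 1` successors,
with last descent lengths `1, 2, …, k + 1`). -/
theorem insertPeak_bijective (m : ℕ) (hm : 1 ≤ m) :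
    (∀ (D : Fin (2*m) → Bool), IsDyckPath m D → ∀ r : ℕ, r ≤ lastDescent m D →
        IsDyckPath (m+1) (insertPeak m D r) ∧
        lastDescent (m+1) (insertPeak m D r) = r + 1) ∧
    (∃ g : {Dr : (Fin (2*m) → Bool) × ℕ //
            IsDyckPath m Dr.1 ∧ Dr.2 ≤ lastDescent m Dr.1} →
          {s : Fin (2*(m+1)) → Bool // IsDyckPath (m+1) s},
      (∀ Dr, (g Dr).1 = insertPeak m Dr.1.1 Dr.1.2) ∧ Function.Bijective g) :=
  insertPeak_bijective_general m
end
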